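/- arXiv:1611.00484 — 4 statements merged into one kernel-verified Lean document; each statement's English description precedes it below -/
import Mathlib

section
/- (Invariant of the Dijkstra-type maximum-capacity algorithm.) Let u be a vertex of the connected graph G and let S ⊆ V be a set of 'visited' vertices with u ∈ S. For v ∈ V, let λ_S(v) denote the maximum of c(p) over all walks p from u to v all of whose vertices except possibly the final vertex v lie in S (with λ_S(u) = 1, and λ_S(v) = 0 if no such walk exists). Suppose that λ_S(v) = c(u,v) for every v ∈ S. If w ∈ V ∖ S satisfies λ_S(w) ≥ λ_S(v) for all v ∈ V ∖ S, then λ_S(w) = c(u,w). -/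
open SimpleGraph

/-- Left-open path capacity of a walk: the minimum weight over all vertices of the
walk except the starting vertex (1 for the trivial walk). -/
noncomputable def walkCap {V : Type*} (ρ : V → ℝ) {G : SimpleGraph V} {u v : V}
    (p : G.Walk u v) : ℝ :=
  (p.support.tail.map ρ).foldr min 1

/-- Left-open inter-node capacity: supremum (= maximum) of walk capacities over
all walks from `u` to `v`. -/
noncomputable def nodeCap {V : Type*} (ρ : V → ℝ) (G : SimpleGraph V) (u v : V) : ℝ :=
  sSup {x : ℝ | ∃ p : G.Walk u v, walkCap ρ p = x}

/-- `v` is α-reachable from `u`: there is a walk from `u` to `v` all of whose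
vertices except possibly the start have weight strictly greater than `α`. -/
def AlphaReach {V : Type*} (ρ : V → ℝ) (G : SimpleGraph V) (α : ℝ) (u v : V) : Prop :=
  ∃ p : G.Walk u v, ∀ w ∈ p.support.tail, α < ρ w

/-- Tentative capacity of `v` with respect to the visited set `S`: the supremum of
capacities of walks from `u` to `v` all of whose vertices except possibly the final
vertex lie in `S`.  (Since `sSup ∅ = 0` in `ℝ`, this is `0` when no such walk
exists, and it equals `1` at `v = u` via the trivial walk.) -/
noncomputable def lamS {V : Type*} (ρ : V → ℝ) (G : SimpleGraph V) (u : V) (S : Set V)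
    (v : V) : ℝ :=
  sSup {x : ℝ | ∃ p : G.Walk u v, (∀ y ∈ p.support.dropLast, y ∈ S) ∧ walkCap ρ p = x}

lemma foldr_min_bounds (l : List ℝ) (h : ∀ x ∈ l, 0 ≤ x ∧ x ≤ 1) :
    0 ≤ l.foldr min 1 ∧ l.foldr min 1 ≤ 1 := by
  induction l with
  | nil => simp
  | cons a l ih =>
    have ha := h a List.mem_cons_self
    have hl := ih (fun x hx => h x (List.mem_cons_of_mem _ hx))
    refine ⟨le_min ha.1 hl.1, min_le_of_right_le hl.2⟩

lemma walkCap_bounds {V : Type*} {ρ : V → ℝ} (hρ : ∀ v : V, 0 ≤ ρ v ∧ ρ v ≤ 1)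
    {G : SimpleGraph V} {u v : V} (p : G.Walk u v) :
    0 ≤ walkCap ρ p ∧ walkCap ρ p ≤ 1 := by
  apply foldr_min_bounds
  intro x hx
  obtain ⟨y, _, rfl⟩ := List.mem_map.mp hx
  exact hρ y

lemma walkCap_cons {V : Type*} (ρ : V → ℝ) {G : SimpleGraph V} {u x w : V}
    (h : G.Adj u x) (p : G.Walk x w) :
    walkCap ρ (SimpleGraph.Walk.cons h p) = min (ρ x) (walkCap ρ p) := by
  unfold walkCap
  rw [SimpleGraph.Walk.support_cons, List.tail_cons]
  conv_lhs => rw [p.support_eq_cons]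
  simp only [List.map_cons, List.foldr_cons]

/-- First-exit lemma: any walk from a vertex in `S` to a vertex outside `S`
admits a prefix ending at some `z ∉ S` whose earlier vertices lie in `S`, with
no smaller capacity. -/
lemma exit_lemma {V : Type*} (ρ : V → ℝ) (hρ : ∀ v : V, 0 ≤ ρ v ∧ ρ v ≤ 1)
    (G : SimpleGraph V) (S : Set V) :
    ∀ {u w : V} (p : G.Walk u w), u ∈ S → w ∉ S →
      ∃ z, z ∉ S ∧ ∃ q : G.Walk u z, (∀ y ∈ q.support.dropLast, y ∈ S) ∧
        walkCap ρ p ≤ walkCap ρ q := by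
  intro u w p
  induction p with
  | nil => intro hu hw; exact absurd hu hw
  | @cons u x w h p ih =>
    intro hu hw
    by_cases hx : x ∈ S
    · obtain ⟨z, hz, q, hq, hle⟩ := ih hx hw
      refine ⟨z, hz, SimpleGraph.Walk.cons h q, ?_, ?_⟩
      · intro y hy
        rw [SimpleGraph.Walk.support_cons,
          List.dropLast_cons_of_ne_nil q.support_ne_nil] at hy
        rcases List.mem_cons.mp hy with rfl | hy
        · exact hu
        · exact hq y hy
      · rw [walkCap_cons, walkCap_cons]
        exact min_le_min le_rfl hle
    · refine ⟨x, hx, SimpleGraph.Walk.cons h SimpleGraph.Walk.nil, ?_, ?_⟩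
      · intro y hy
        simp only [SimpleGraph.Walk.support_cons, SimpleGraph.Walk.support_nil,
          List.dropLast, List.mem_singleton] at hy
        subst hy; exact hu
      · rw [walkCap_cons, walkCap_cons]
        refine min_le_min le_rfl ?_
        have := (walkCap_bounds hρ p).2
        simpa [walkCap] using this

/-- invariant of the Dijkstra-type maximum-capacity algorithm:
if `λ_S(v) = c(u,v)` for all visited `v ∈ S`, and `w ∉ S` maximizes `λ_S` among
unvisited vertices, then `λ_S(w) = c(u,w)`. -/
theorem dijkstra_invariant {V : Type*} [Fintype V] (G : SimpleGraph V) (ρ : V → ℝ)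
    (hρ : ∀ v : V, 0 ≤ ρ v ∧ ρ v ≤ 1) (hG : G.Connected)
    (u : V) (S : Set V) (huS : u ∈ S)
    (hvisited : ∀ v ∈ S, lamS ρ G u S v = nodeCap ρ G u v)
    (w : V) (hw : w ∉ S)
    (hmax : ∀ v : V, v ∉ S → lamS ρ G u S v ≤ lamS ρ G u S w) :
    lamS ρ G u S w = nodeCap ρ G u w := by
  have hbddN : BddAbove {x : ℝ | ∃ p : G.Walk u w, walkCap ρ p = x} := by
    refine ⟨1, ?_⟩
    rintro x ⟨p, rfl⟩
    exact (walkCap_bounds hρ p).2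
  have hbddL : ∀ z : V,
      BddAbove {x : ℝ | ∃ p : G.Walk u z, (∀ y ∈ p.support.dropLast, y ∈ S) ∧
        walkCap ρ p = x} := by
    intro z
    refine ⟨1, ?_⟩
    rintro x ⟨p, _, rfl⟩
    exact (walkCap_bounds hρ p).2
  have key : ∀ p : G.Walk u w, walkCap ρ p ≤ lamS ρ G u S w := by
    intro p
    obtain ⟨z, hz, q, hq, hle⟩ := exit_lemma ρ hρ G S p huS hw
    have h1 : walkCap ρ q ≤ lamS ρ G u S z := le_csSup (hbddL z) ⟨q, hq, rfl⟩
    exact hle.trans (h1.trans (hmax z hz))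
  obtain ⟨p0⟩ := (hG.preconnected u w)
  have h0 : 0 ≤ lamS ρ G u S w := le_trans (walkCap_bounds hρ p0).1 (key p0)
  apply le_antisymm
  · apply Real.sSup_le
    · rintro x ⟨p, _, rfl⟩
      exact le_csSup hbddN ⟨p, rfl⟩
    · exact le_trans (walkCap_bounds hρ p0).1 (le_csSup hbddN ⟨p0, rfl⟩)
  · apply Real.sSup_le
    · rintro x ⟨p, rfl⟩
      exact key p
    · exact h0
end

section
/- (Existence of a maximum-capacity spanning tree from a source.) Let u be a vertex of the finite connected graph G. Then there exists a spanning tree T of G such that for every vertex v ≠ u, the left-open path capacity of the unique path in T from u to v equals the inter-node capacity c(u,v) computed in G. Consequently, for every α ∈ [0,1) and every vertex v, if v is α-reachable from u in G then v is α-reachable from u within T. -/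
open SimpleGraph

namespace MaxCapAux

lemma foldr_min_le_one (l : List ℝ) : l.foldr min 1 ≤ 1 := by
  induction l with
  | nil => simp
  | cons a l ih => exact le_trans (min_le_right _ _) ih

lemma foldr_min_le_mem {l : List ℝ} {x : ℝ} (hx : x ∈ l) : l.foldr min 1 ≤ x := by
  induction l with
  | nil => simp at hx
  | cons a l ih =>
    rcases List.mem_cons.1 hx with rfl | hx
    · exact min_le_left _ _
    · exact le_trans (min_le_right _ _) (ih hx)

lemma le_foldr_min {l : List ℝ} {c : ℝ} (h1 : c ≤ 1) (h : ∀ x ∈ l, c ≤ x) :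
    c ≤ l.foldr min 1 := by
  induction l with
  | nil => simpa
  | cons a l ih =>
    exact le_min (h a List.mem_cons_self) (ih fun x hx => h x (List.mem_cons_of_mem _ hx))

lemma lt_foldr_min {l : List ℝ} {c : ℝ} (h1 : c < 1) (h : ∀ x ∈ l, c < x) :
    c < l.foldr min 1 := by
  induction l with
  | nil => simpa
  | cons a l ih =>
    exact lt_min (h a List.mem_cons_self) (ih fun x hx => h x (List.mem_cons_of_mem _ hx))

lemma foldr_min_append (l : List ℝ) (a : ℝ) :
    (l ++ [a]).foldr min 1 = min (l.foldr min 1) a := by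
  induction l with
  | nil => simp [min_comm]
  | cons b l ih => simp [ih, min_assoc]

lemma foldr_min_mem (l : List ℝ) : l.foldr min 1 = 1 ∨ l.foldr min 1 ∈ l := by
  induction l with
  | nil => simp
  | cons a l ih =>
    rcases min_cases a (l.foldr min 1) with ⟨h, _⟩ | ⟨h, _⟩
    · right; simp [List.foldr_cons, h]
    · rcases ih with h1 | h1
      · left; simpa [List.foldr_cons, h]
      · right; simp only [List.foldr_cons, h]; exact List.mem_cons_of_mem _ h1

variable {V : Type*} {G : SimpleGraph V} {ρ : V → ℝ}

lemma walkCap_nil {u : V} : walkCap ρ (Walk.nil : G.Walk u u) = 1 := by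
  simp [walkCap]

lemma walkCap_le_one {u v : V} (p : G.Walk u v) : walkCap ρ p ≤ 1 :=
  foldr_min_le_one _

lemma walkCap_concat {u v w : V} (p : G.Walk u v) (h : G.Adj v w) :
    walkCap ρ (p.concat h) = min (walkCap ρ p) (ρ w) := by
  unfold walkCap
  rw [Walk.support_concat]
  rw [p.support_eq_cons]
  simp only [List.cons_append, List.tail_cons, List.map_append, List.map_cons, List.map_nil]
  exact foldr_min_append _ _

lemma walkCap_le_of_mem_tail {u v w : V} {p : G.Walk u v} (hw : w ∈ p.support.tail) :
    walkCap ρ p ≤ ρ w :=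
  foldr_min_le_mem (List.mem_map_of_mem (f := ρ) hw)

lemma end_mem_tail {u v : V} (p : G.Walk u v) (hvu : v ≠ u) : v ∈ p.support.tail := by
  have hv : v ∈ p.support := p.end_mem_support
  rw [p.support_eq_cons] at hv
  rcases List.mem_cons.1 hv with h | h
  · exact absurd h hvu
  · exact h

lemma capSet_finite [Fintype V] (ρ : V → ℝ) (G : SimpleGraph V) (u v : V) :
    Set.Finite {x : ℝ | ∃ p : G.Walk u v, walkCap ρ p = x} := by
  apply ((Set.finite_range ρ).insert 1).subset
  rintro x ⟨q, rfl⟩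
  rcases foldr_min_mem ((q.support.tail.map ρ)) with h | h
  · exact Or.inl h
  · rcases List.mem_map.1 h with ⟨y, _, hy⟩
    exact Or.inr ⟨y, hy⟩

lemma walkCap_le_nodeCap [Fintype V] (ρ : V → ℝ) (G : SimpleGraph V) {u v : V}
    (p : G.Walk u v) : walkCap ρ p ≤ nodeCap ρ G u v :=
  le_csSup (capSet_finite ρ G u v).bddAbove ⟨p, rfl⟩

lemma exists_opt [Fintype V] (ρ : V → ℝ) {G : SimpleGraph V} (hG : G.Connected) (u v : V) :
    ∃ p : G.Walk u v, walkCap ρ p = nodeCap ρ G u v := by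
  have hne : {x : ℝ | ∃ p : G.Walk u v, walkCap ρ p = x}.Nonempty := by
    obtain ⟨p⟩ := hG u v
    exact ⟨_, p, rfl⟩
  have := hne.csSup_mem (capSet_finite ρ G u v)
  exact this

lemma nodeCap_self [Fintype V] (ρ : V → ℝ) {G : SimpleGraph V} (hG : G.Connected) (u : V) :
    nodeCap ρ G u u = 1 := by
  refine le_antisymm (csSup_le ⟨_, Walk.nil, rfl⟩ ?_) (walkCap_nil ▸ walkCap_le_nodeCap ρ G Walk.nil)
  rintro x ⟨p, rfl⟩
  exact walkCap_le_one p

lemma nodeCap_le_rho [Fintype V] (ρ : V → ℝ) {G : SimpleGraph V} (hG : G.Connected)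
    {u v : V} (hvu : v ≠ u) : nodeCap ρ G u v ≤ ρ v := by
  have hne : {x : ℝ | ∃ p : G.Walk u v, walkCap ρ p = x}.Nonempty := by
    obtain ⟨p⟩ := hG u v
    exact ⟨_, p, rfl⟩
  refine csSup_le hne ?_
  rintro x ⟨p, rfl⟩
  exact walkCap_le_of_mem_tail (end_mem_tail p hvu)

lemma walkCap_bypass_le [Fintype V] [DecidableEq V] (ρ : V → ℝ) {G : SimpleGraph V} {u v : V}
    (p : G.Walk u v) : walkCap ρ p ≤ walkCap ρ p.bypass := by
  apply le_foldr_min (walkCap_le_one p)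
  intro x hx
  rcases List.mem_map.1 hx with ⟨y, hy, rfl⟩
  apply walkCap_le_of_mem_tail
  have hyb : y ∈ p.bypass.support := List.mem_of_mem_tail hy
  have hyu : y ≠ u := by
    intro h; subst h
    have := p.bypass_isPath.2
    rw [p.bypass.support_eq_cons] at this
    exact (List.nodup_cons.1 this).1 hy
  have := p.support_bypass_subset hyb
  rw [p.support_eq_cons] at this
  rcases List.mem_cons.1 this with h | h
  · exact absurd h hyu
  · exact h

lemma exists_concat {a b : V} (p : G.Walk a b) (hab : a ≠ b) :
    ∃ (w : V) (q : G.Walk a w) (h : G.Adj w b), p = q.concat h := by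
  cases p with
  | nil => exact absurd rfl hab
  | cons h q => exact Walk.exists_cons_eq_concat h q

end MaxCapAux
/-- maximum-capacity spanning tree from a source: there is a spanning
tree `T` of `G` such that for every `v ≠ u` the capacity of the unique path in `T`
from `u` to `v` equals the inter-node capacity `c(u,v)` computed in `G`; hence for
every `α ∈ [0,1)`, α-reachability from `u` in `G` implies α-reachability in `T`. -/
theorem exists_max_capacity_spanning_tree {V : Type*} [Fintype V] (G : SimpleGraph V)
    (ρ : V → ℝ) (hρ : ∀ v : V, 0 ≤ ρ v ∧ ρ v ≤ 1) (hG : G.Connected) (u : V) :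
    ∃ T : SimpleGraph V, T ≤ G ∧ T.IsTree ∧
      (∀ v : V, v ≠ u → ∀ q : T.Walk u v, q.IsPath → walkCap ρ q = nodeCap ρ G u v) ∧
      (∀ α : ℝ, 0 ≤ α → α < 1 → ∀ v : V,
        AlphaReach ρ G α u v → AlphaReach ρ T α u v) := by
  classical
  have hSne : ∀ v, {n | ∃ p : G.Walk u v, walkCap ρ p = nodeCap ρ G u v ∧ p.length = n}.Nonempty := by
    intro v
    obtain ⟨p, hp⟩ := MaxCapAux.exists_opt ρ hG u v
    exact ⟨p.length, p, hp, rfl⟩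
  set Φ : V → ℕ := fun v =>
    sInf {n | ∃ p : G.Walk u v, walkCap ρ p = nodeCap ρ G u v ∧ p.length = n} with hΦdef
  have hΦmem : ∀ v, ∃ p : G.Walk u v, walkCap ρ p = nodeCap ρ G u v ∧ p.length = Φ v :=
    fun v => Nat.sInf_mem (hSne v)
  have hΦle : ∀ (v : V) (p : G.Walk u v), walkCap ρ p = nodeCap ρ G u v → Φ v ≤ p.length :=
    fun v p hp => Nat.sInf_le ⟨p, hp, rfl⟩
  have hΦlt : ∀ v, Φ v < Fintype.card V := by
    intro v
    obtain ⟨p, hp⟩ := MaxCapAux.exists_opt ρ hG u v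
    have h1 : walkCap ρ p.bypass = nodeCap ρ G u v :=
      le_antisymm (MaxCapAux.walkCap_le_nodeCap ρ G _) (hp ▸ MaxCapAux.walkCap_bypass_le ρ p)
    exact lt_of_le_of_lt (hΦle v p.bypass h1) p.bypass_isPath.length_lt
  set m : V → ℕ := fun v =>
    (Finset.univ.filter fun w => nodeCap ρ G u v < nodeCap ρ G u w).card * Fintype.card V + Φ v
    with hmdef
  -- key lemma
  have key : ∀ v, v ≠ u →
      ∃ w, G.Adj w v ∧ nodeCap ρ G u v = min (nodeCap ρ G u w) (ρ v) ∧ m w < m v := by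
    intro v hvu
    obtain ⟨p, hpcap, hplen⟩ := hΦmem v
    obtain ⟨w, q, hadj, rfl⟩ := MaxCapAux.exists_concat p (Ne.symm hvu)
    rw [MaxCapAux.walkCap_concat] at hpcap
    have hqw : walkCap ρ q ≤ nodeCap ρ G u w := MaxCapAux.walkCap_le_nodeCap ρ G q
    have hcvq : nodeCap ρ G u v ≤ walkCap ρ q := hpcap ▸ min_le_left _ _
    have hcvρ : nodeCap ρ G u v ≤ ρ v := hpcap ▸ min_le_right _ _
    have hcvw : nodeCap ρ G u v ≤ nodeCap ρ G u w := hcvq.trans hqw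
    have hmin : nodeCap ρ G u v = min (nodeCap ρ G u w) (ρ v) := by
      refine le_antisymm (le_min hcvw hcvρ) ?_
      obtain ⟨r, hr, -⟩ := hΦmem w
      have h2 := MaxCapAux.walkCap_le_nodeCap ρ G (r.concat hadj)
      rwa [MaxCapAux.walkCap_concat, hr] at h2
    refine ⟨w, hadj, hmin, ?_⟩
    by_cases hcase : nodeCap ρ G u v < nodeCap ρ G u w
    · have hsub : (Finset.univ.filter fun x => nodeCap ρ G u w < nodeCap ρ G u x) ⊂
          (Finset.univ.filter fun x => nodeCap ρ G u v < nodeCap ρ G u x) := by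
        constructor
        · intro x hx
          simp only [Finset.mem_filter, Finset.mem_univ, true_and] at hx ⊢
          exact hcase.trans hx
        · intro hcon
          have hw : w ∈ (Finset.univ.filter fun x => nodeCap ρ G u v < nodeCap ρ G u x) := by
            simp [hcase]
          have h3 := hcon hw
          simp at h3
      have hglt : (Finset.univ.filter fun x => nodeCap ρ G u w < nodeCap ρ G u x).card <
          (Finset.univ.filter fun x => nodeCap ρ G u v < nodeCap ρ G u x).card :=
        Finset.card_lt_card hsub
      have hΦw := hΦlt w
      simp only [hmdef]
      set a := (Finset.univ.filter fun x => nodeCap ρ G u w < nodeCap ρ G u x).card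
      set b := (Finset.univ.filter fun x => nodeCap ρ G u v < nodeCap ρ G u x).card
      calc a * Fintype.card V + Φ w < (a + 1) * Fintype.card V := by
            rw [add_mul, one_mul]; omega
        _ ≤ b * Fintype.card V := Nat.mul_le_mul_right _ hglt
        _ ≤ b * Fintype.card V + Φ v := Nat.le_add_right _ _
    · have hcwv : nodeCap ρ G u w = nodeCap ρ G u v := le_antisymm (not_lt.1 hcase) hcvw
      have hq : walkCap ρ q = nodeCap ρ G u w := le_antisymm hqw (hcwv ▸ hcvq)
      have hΦw : Φ w < Φ v := by
        have h4 := hΦle w q hq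
        have hlen : q.length + 1 = Φ v := by rw [← hplen, Walk.length_concat]
        omega
      have hgeq : (Finset.univ.filter fun x => nodeCap ρ G u w < nodeCap ρ G u x) =
          (Finset.univ.filter fun x => nodeCap ρ G u v < nodeCap ρ G u x) := by
        rw [hcwv]
      simp only [hmdef, hgeq]
      omega
  -- parent function
  choose f hf using key
  set F : V → V := fun v => if h : v = u then u else f v h with hFdef
  have hF : ∀ v (h : v ≠ u), G.Adj (F v) v ∧
      nodeCap ρ G u v = min (nodeCap ρ G u (F v)) (ρ v) ∧ m (F v) < m v := by
    intro v h
    simp only [hFdef, dif_neg h]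
    exact hf v h
  set T : SimpleGraph V := SimpleGraph.fromRel (fun a b => a ≠ u ∧ F a = b) with hTdef
  have hTle : T ≤ G := by
    intro a b hab
    rw [hTdef, fromRel_adj] at hab
    obtain ⟨-, ⟨hau, hfa⟩ | ⟨hbu, hfb⟩⟩ := hab
    · exact hfa ▸ ((hF a hau).1).symm
    · exact hfb ▸ (hF b hbu).1
  have hAdjT : ∀ v (h : v ≠ u), T.Adj (F v) v := by
    intro v h
    rw [hTdef, fromRel_adj]
    exact ⟨(hF v h).1.ne, Or.inr ⟨h, rfl⟩⟩
  have hreach : ∀ n v, m v < n → T.Reachable v u := by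
    intro n
    induction n with
    | zero => intro v hv; omega
    | succ n ih =>
      intro v hv
      by_cases h : v = u
      · subst h; exact Reachable.refl _
      · have hlt := (hF v h).2.2
        exact ((hAdjT v h).symm.reachable).trans (ih (F v) (by omega))
  have hnV : Nonempty V := ⟨u⟩
  have hTconn : T.Connected :=
    ⟨fun a b => (hreach (m a + 1) a (Nat.lt_succ_self _)).trans
      (hreach (m b + 1) b (Nat.lt_succ_self _)).symm⟩
  -- acyclicity
  have hacyc : T.IsAcyclic := by
    intro a cyc hcyc
    obtain ⟨x, hx, hmax⟩ := cyc.support.toFinset.exists_max_image m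
      ⟨a, List.mem_toFinset.2 cyc.start_mem_support⟩
    have hx' : x ∈ cyc.support := List.mem_toFinset.1 hx
    have hcyc' : (cyc.rotate x hx').IsCycle := hcyc.rotate hx'
    have hsup : ∀ y ∈ (cyc.rotate x hx').support, m y ≤ m x := by
      intro y hy
      rw [(cyc.rotate x hx').support_eq_cons] at hy
      rcases List.mem_cons.1 hy with rfl | hy
      · exact le_refl _
      · have h5 : y ∈ cyc.support.tail := (Walk.support_rotate cyc x hx').mem_iff.1 hy
        exact hmax y (List.mem_toFinset.2 (List.mem_of_mem_tail h5))
    revert hcyc' hsup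
    generalize cyc.rotate x hx' = c'
    intro hcyc' hsup
    cases c' with
    | nil => exact hcyc'.not_nil (by simp)
    | cons hxy p =>
      rename_i y
      have hyx : y ≠ x := hxy.ne'
      obtain ⟨z, q, hzx, rfl⟩ := MaxCapAux.exists_concat p hyx
      have hy : m y ≤ m x := by
        apply hsup
        rw [Walk.support_cons]
        exact List.mem_cons_of_mem _ (q.concat hzx).start_mem_support
      have hz : m z ≤ m x := by
        apply hsup
        rw [Walk.support_cons]
        apply List.mem_cons_of_mem
        rw [Walk.support_concat]
        exact List.mem_append_left _ q.end_mem_support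
      rw [hTdef, fromRel_adj] at hxy hzx
      obtain ⟨-, ⟨hxu, hfx⟩ | ⟨hyu, hfy⟩⟩ := hxy
      swap
      · have := (hF y hyu).2.2
        rw [hfy] at this
        omega
      obtain ⟨-, ⟨hzu, hfz⟩ | ⟨hxu2, hfx2⟩⟩ := hzx
      · have := (hF z hzu).2.2
        rw [hfz] at this
        omega
      have hyz : y = z := by rw [← hfx, ← hfx2]
      have hnodup := hcyc'.isCircuit.isTrail.edges_nodup
      rw [Walk.edges_cons, Walk.edges_concat] at hnodup
      have hmem : s(z, x) ∈ q.edges.concat s(z, x) := by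
        rw [List.concat_eq_append]
        exact List.mem_append_right _ (List.mem_singleton_self _)
      have : s(x, y) = s(z, x) := by rw [hyz, Sym2.eq_swap]
      exact (List.nodup_cons.1 hnodup).1 (this ▸ hmem)
  have hT : T.IsTree := ⟨hTconn, hacyc⟩
  -- chain path
  have hchain : ∀ n v, m v < n → ∃ q : T.Walk u v, q.IsPath ∧
      walkCap ρ q = nodeCap ρ G u v ∧ ∀ x ∈ q.support, x = u ∨ m x ≤ m v := by
    intro n
    induction n with
    | zero => intro v hv; omega
    | succ n ih =>
      intro v hv
      by_cases h : v = u
      · subst h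
        refine ⟨Walk.nil, Walk.IsPath.nil, ?_, by simp⟩
        rw [MaxCapAux.walkCap_nil]
        exact (MaxCapAux.nodeCap_self ρ hG _).symm
      · have hlt := (hF v h).2.2
        obtain ⟨q, hqp, hqcap, hqsup⟩ := ih (F v) (by omega)
        have hvs : v ∉ q.support := by
          intro hvq
          rcases hqsup v hvq with rfl | hle
          · exact h rfl
          · omega
        refine ⟨q.concat (hAdjT v h), ?_, ?_, ?_⟩
        · rw [Walk.isPath_def, Walk.support_concat]
          rw [List.nodup_append]
          exact ⟨hqp.support_nodup, List.nodup_singleton v,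
            fun a ha b hb hab => hvs (by simp_all)⟩
        · rw [MaxCapAux.walkCap_concat, hqcap]
          exact ((hF v h).2.1).symm
        · intro x hx
          rw [Walk.support_concat] at hx
          rcases List.mem_append.1 hx with hx | hx
          · rcases hqsup x hx with h1 | h1
            · exact Or.inl h1
            · exact Or.inr (h1.trans (le_of_lt hlt))
          · rw [List.mem_singleton] at hx
            subst hx
            exact Or.inr (le_refl _)
  refine ⟨T, hTle, hT, ?_, ?_⟩
  · intro v hvu qq hqq
    obtain ⟨q, hqp, hqcap, -⟩ := hchain (m v + 1) v (Nat.lt_succ_self _)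
    have heq : qq = q := (hT.existsUnique_path u v).unique hqq hqp
    rw [heq, hqcap]
  · rintro α hα0 hα1 v ⟨p, hp⟩
    by_cases h : v = u
    · subst h
      exact ⟨Walk.nil, by simp⟩
    · obtain ⟨q, -, hqcap, -⟩ := hchain (m v + 1) v (Nat.lt_succ_self _)
      have hcap : α < walkCap ρ p := by
        apply MaxCapAux.lt_foldr_min hα1
        intro x hx
        rcases List.mem_map.1 hx with ⟨y, hy, rfl⟩
        exact hp y hy
      have hαc : α < walkCap ρ q := by
        rw [hqcap]
        exact hcap.trans_le (MaxCapAux.walkCap_le_nodeCap ρ G p)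
      exact ⟨q, fun w hw => hαc.trans_le (MaxCapAux.walkCap_le_of_mem_tail hw)⟩
end

section
/- (Correctness part of the jump-discontinuity theorem.) Let O ⊆ V be a set of core objects with |O| ≥ 2 and let L = { c(u,v) : u, v ∈ O, u ≠ v }. Then every ℓ ∈ L with ℓ < 1 is a jump discontinuity of the clustering: there exist distinct u, v ∈ O such that u R_α v holds for every α ∈ [0, ℓ) and u R_α v fails for every α ∈ [ℓ, 1). Consequently, for any α₁ < ℓ ≤ α₂ < 1, the equivalence relations R_{α₁} and R_{α₂} on O differ, and the number of equivalence classes at α₂ is strictly larger than at α₁. -/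
/-!
Lowering the threshold `α` only adds walks whose inner vertices all exceed `α`, so `R_α` gets
coarser as `α` decreases. A pair `u ≠ v` of core objects with `c(u,v) = ℓ` is related exactly
below `ℓ`; hence passing from `α₁ < ℓ` to `α₂ ≥ ℓ` separates `u` from `v`, and the quotient map
from the `R_{α₂}`-clusters onto the `R_{α₁}`-clusters is surjective but not injective.
-/

open SimpleGraph

/-- The number of equivalence classes ("clusters") of the relation `R_α` on the set
`O` of core objects, where `u R_α v` iff `u = v` or `c(u,v) > α`. -/
noncomputable def numClusters {V : Type*} (ρ : V → ℝ) (G : SimpleGraph V) (O : Set V)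
    (α : ℝ) : ℕ :=
  Nat.card (Quot (fun a b : O => (a : V) = (b : V) ∨ α < nodeCap ρ G a b))

theorem List.lt_foldr_min_iff {α : Type*} [LinearOrder α] (a b : α) (l : List α) :
    a < l.foldr min b ↔ a < b ∧ ∀ x ∈ l, a < x := by
  induction l with
  | nil => simp
  | cons c l ih => simp only [List.foldr_cons, lt_min_iff, ih, List.forall_mem_cons]; tauto

theorem List.foldr_min_le {α : Type*} [LinearOrder α] (b : α) (l : List α) :
    l.foldr min b ≤ b := by
  induction l with
  | nil => exact le_rfl
  | cons a l ih => exact (min_le_right _ _).trans ih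

section Capacity

variable {V : Type*} (ρ : V → ℝ) {G : SimpleGraph V}

theorem walkCap_le_one {u v : V} (p : G.Walk u v) : walkCap ρ p ≤ 1 :=
  List.foldr_min_le 1 _

theorem lt_walkCap_iff {u v : V} (p : G.Walk u v) (α : ℝ) :
    α < walkCap ρ p ↔ α < 1 ∧ ∀ w ∈ p.support.tail, α < ρ w := by
  simp only [walkCap, List.lt_foldr_min_iff, List.forall_mem_map]

theorem lt_nodeCap_iff {u v : V} (huv : G.Reachable u v) (α : ℝ) :
    α < nodeCap ρ G u v ↔ α < 1 ∧ AlphaReach ρ G α u v := by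
  have hbdd : BddAbove {x : ℝ | ∃ p : G.Walk u v, walkCap ρ p = x} :=
    ⟨1, by rintro x ⟨p, rfl⟩; exact walkCap_le_one ρ p⟩
  have hne : {x : ℝ | ∃ p : G.Walk u v, walkCap ρ p = x}.Nonempty :=
    let ⟨p₀⟩ := huv; ⟨walkCap ρ p₀, p₀, rfl⟩
  constructor
  · intro h
    obtain ⟨x, ⟨p, rfl⟩, hx⟩ := exists_lt_of_lt_csSup hne h
    obtain ⟨hα, hp⟩ := (lt_walkCap_iff ρ p α).1 hx
    exact ⟨hα, p, hp⟩
  · rintro ⟨hα, p, hp⟩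
    exact ((lt_walkCap_iff ρ p α).2 ⟨hα, hp⟩).trans_le (le_csSup hbdd ⟨p, rfl⟩)

variable {ρ}

theorem AlphaReach.trans {α : ℝ} {u v w : V} (huv : AlphaReach ρ G α u v)
    (hvw : AlphaReach ρ G α v w) : AlphaReach ρ G α u w := by
  obtain ⟨p, hp⟩ := huv
  obtain ⟨q, hq⟩ := hvw
  refine ⟨p.append q, fun x hx => ?_⟩
  rcases (Walk.mem_tail_support_append_iff p q).1 hx with hx | hx
  · exact hp x hx
  · exact hq x hx

/-- The start of a walk is not constrained, so reversing needs the start to be heavy too. -/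
theorem AlphaReach.symm {α : ℝ} {u v : V} (huv : AlphaReach ρ G α u v) (hu : α < ρ u) :
    AlphaReach ρ G α v u := by
  obtain ⟨p, hp⟩ := huv
  refine ⟨p.reverse, fun w hw => ?_⟩
  have hw : w ∈ p.support := by
    simpa only [Walk.support_reverse, List.mem_reverse] using List.mem_of_mem_tail hw
  rw [← Walk.cons_tail_support] at hw
  rcases List.mem_cons.1 hw with rfl | hw
  · exact hu
  · exact hp w hw

end Capacity

/-- The relation `R_α` on the core objects `O`. -/
def coreRel {V : Type*} (ρ : V → ℝ) (G : SimpleGraph V) (O : Set V) (α : ℝ) (a b : O) : Prop :=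
  (a : V) = b ∨ α < nodeCap ρ G a b

section CoreRel

variable {V : Type*} {ρ : V → ℝ} {G : SimpleGraph V} {O : Set V}

theorem coreRel_equivalence (hG : G.Connected) (hO : ∀ o ∈ O, ρ o = 1) (α : ℝ) :
    Equivalence (coreRel ρ G O α) where
  refl _ := Or.inl rfl
  symm {a b} := by
    rintro (h | h)
    · exact Or.inl h.symm
    · obtain ⟨hα, hab⟩ := (lt_nodeCap_iff ρ (hG.preconnected a b) α).1 h
      exact Or.inr <| (lt_nodeCap_iff ρ (hG.preconnected b a) α).2
        ⟨hα, hab.symm (by rwa [hO a a.2])⟩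
  trans {a b c} := by
    rintro (hab | hab) (hbc | hbc)
    · exact Or.inl (hab.trans hbc)
    · exact Or.inr (hab ▸ hbc)
    · exact Or.inr (hbc ▸ hab)
    · obtain ⟨hα, hab⟩ := (lt_nodeCap_iff ρ (hG.preconnected a b) α).1 hab
      obtain ⟨-, hbc⟩ := (lt_nodeCap_iff ρ (hG.preconnected b c) α).1 hbc
      exact Or.inr <| (lt_nodeCap_iff ρ (hG.preconnected a c) α).2 ⟨hα, hab.trans hbc⟩

theorem coreRel_anti {α₁ α₂ : ℝ} (h : α₁ ≤ α₂) {a b : O} (hab : coreRel ρ G O α₂ a b) :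
    coreRel ρ G O α₁ a b :=
  hab.imp_right h.trans_lt

end CoreRel

theorem Nat.card_quot_lt_card_quot {X : Type*} [Finite X] {r s : X → X → Prop}
    (hs : Equivalence s) (hsr : ∀ a b, s a b → r a b) {a b : X} (hr : r a b) (hns : ¬ s a b) :
    Nat.card (Quot r) < Nat.card (Quot s) := by
  have : Fintype (Quot r) := Fintype.ofFinite _
  have : Fintype (Quot s) := Fintype.ofFinite _
  let f : Quot s → Quot r := Quot.map id hsr
  have hf : Function.Surjective f := Quot.ind fun x => ⟨Quot.mk s x, rfl⟩
  have hf' : ¬ Function.Injective f := fun hinj =>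
    hns (hs.eqvGen_iff.1 (Quot.eq.1 (hinj (Quot.sound hr))))
  simpa only [Nat.card_eq_fintype_card] using Fintype.card_lt_of_surjective_not_injective f hf hf'

theorem JD_correctness_general {V : Type*} [Fintype V] (G : SimpleGraph V) (ρ : V → ℝ)
    (hG : G.Connected)
    (O : Set V) (hO : ∀ o ∈ O, ρ o = 1)
    (ℓ : ℝ) (hℓ : ∃ u ∈ O, ∃ v ∈ O, u ≠ v ∧ ℓ = nodeCap ρ G u v) :
    (∃ u ∈ O, ∃ v ∈ O, u ≠ v ∧
      (∀ α : ℝ, 0 ≤ α → α < ℓ → (u = v ∨ α < nodeCap ρ G u v)) ∧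
      (∀ α : ℝ, ℓ ≤ α → α < 1 → ¬(u = v ∨ α < nodeCap ρ G u v))) ∧
    (∀ α₁ α₂ : ℝ, 0 ≤ α₁ → α₁ < ℓ → ℓ ≤ α₂ → α₂ < 1 →
      (∃ u ∈ O, ∃ v ∈ O,
        ¬((u = v ∨ α₁ < nodeCap ρ G u v) ↔ (u = v ∨ α₂ < nodeCap ρ G u v))) ∧
      numClusters ρ G O α₁ < numClusters ρ G O α₂) := by
  obtain ⟨u, hu, v, hv, huv, rfl⟩ := hℓ
  have below : ∀ α, α < nodeCap ρ G u v → coreRel ρ G O α ⟨u, hu⟩ ⟨v, hv⟩ := fun _ => Or.inr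
  have above : ∀ α, nodeCap ρ G u v ≤ α → ¬ coreRel ρ G O α ⟨u, hu⟩ ⟨v, hv⟩ :=
    fun _ hα h => h.elim huv hα.not_gt
  refine ⟨⟨u, hu, v, hv, huv, fun α _ => below α, fun α hα _ => above α hα⟩,
    fun α₁ α₂ _ h₁ h₂ _ => ⟨⟨u, hu, v, hv, fun h => above α₂ h₂ (h.1 (below α₁ h₁))⟩, ?_⟩⟩
  exact Nat.card_quot_lt_card_quot (coreRel_equivalence hG hO α₂)
    (fun _ _ => coreRel_anti (h₁.trans_le h₂).le) (below α₁ h₁) (above α₂ h₂)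

/-- correctness part of the jump-discontinuity theorem: every
`ℓ ∈ L = {c(u,v) : u ≠ v ∈ O}` with `ℓ < 1` is a jump discontinuity: there are
distinct `u, v ∈ O` related by `R_α` for all `α ∈ [0,ℓ)` and unrelated for all
`α ∈ [ℓ,1)`; consequently for any `α₁ < ℓ ≤ α₂ < 1` the relations `R_{α₁}` and
`R_{α₂}` differ and the number of clusters strictly increases. -/
theorem JD_correctness {V : Type*} [Fintype V] (G : SimpleGraph V) (ρ : V → ℝ)
    (hρ : ∀ v : V, 0 ≤ ρ v ∧ ρ v ≤ 1) (hG : G.Connected)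
    (O : Set V) (hO : ∀ o ∈ O, ρ o = 1) (hO2 : 2 ≤ O.ncard)
    (ℓ : ℝ) (hℓ : ∃ u ∈ O, ∃ v ∈ O, u ≠ v ∧ ℓ = nodeCap ρ G u v) (hℓ1 : ℓ < 1) :
    (∃ u ∈ O, ∃ v ∈ O, u ≠ v ∧
      (∀ α : ℝ, 0 ≤ α → α < ℓ → (u = v ∨ α < nodeCap ρ G u v)) ∧
      (∀ α : ℝ, ℓ ≤ α → α < 1 → ¬(u = v ∨ α < nodeCap ρ G u v))) ∧
    (∀ α₁ α₂ : ℝ, 0 ≤ α₁ → α₁ < ℓ → ℓ ≤ α₂ → α₂ < 1 →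
      (∃ u ∈ O, ∃ v ∈ O,
        ¬((u = v ∨ α₁ < nodeCap ρ G u v) ↔ (u = v ∨ α₂ < nodeCap ρ G u v))) ∧
      numClusters ρ G O α₁ < numClusters ρ G O α₂) :=
  JD_correctness_general G ρ hG O hO ℓ hℓ
end

section
/- Bound on the number of jump discontinuities: let O ⊆ V be a nonempty set of core objects and let L = { c(u,v) : u, v ∈ O, u ≠ v, c(u,v) < 1 }. Then |L| ≤ |O|; equivalently, the cluster-count function α ↦ N(α) on [0,1) (the number of equivalence classes of R_α on O) takes at most |O| distinct values. -/
/-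
For core objects the capacity is symmetric (reversing a walk swaps its endpoints, both of
weight `1`) and ultrametric, `min (c(u,v), c(v,w)) ≤ c(u,w)`, since optimal walks can be
concatenated. In an ultrametric each new point `b` contributes at most one new value: if `v₀`
maximises `c(b, ·)` on the old points, then every other `c(b, v)` equals `c(b, v₀)` or `c(v₀, v)`.
So `|O|` core objects realise at most `|O| - 1` distinct capacities. The cluster count always lies
in `[1, |O|]`.
-/

open SimpleGraph

namespace List

variable {α : Type*} [LinearOrder α]

theorem foldr_min_le_init (l : List α) (b : α) : l.foldr min b ≤ b := by
  induction l with
  | nil => exact le_rfl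
  | cons a l ih => exact (min_le_right _ _).trans ih

theorem foldr_min_append (l₁ l₂ : List α) (b : α) :
    (l₁ ++ l₂).foldr min b = min (l₁.foldr min b) (l₂.foldr min b) := by
  induction l₁ with
  | nil => exact (min_eq_right (foldr_min_le_init l₂ b)).symm
  | cons a l ih => simp [ih, min_assoc]

theorem foldr_min_eq_or_mem (l : List α) (b : α) : l.foldr min b = b ∨ l.foldr min b ∈ l := by
  induction l with
  | nil => exact .inl rfl
  | cons a l ih =>
    rcases min_choice a (l.foldr min b) with h | h
    · simp [h]
    · rw [foldr_cons, h]
      exact ih.imp_right (mem_cons_of_mem a)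

end List

section WalkCapacity

variable {V : Type*} (ρ : V → ℝ) {G : SimpleGraph V}

theorem walkCap_append {u v w : V} (p : G.Walk u v) (q : G.Walk v w) :
    walkCap ρ (p.append q) = min (walkCap ρ p) (walkCap ρ q) := by
  rw [walkCap, Walk.support_append, List.tail_append_of_ne_nil p.support_ne_nil,
    List.map_append, List.foldr_min_append, walkCap, walkCap]

theorem walkCap_eq_foldr_support {u v : V} (hu : ρ u = 1) (p : G.Walk u v) :
    walkCap ρ p = (p.support.map ρ).foldr min 1 := by
  rw [← Walk.cons_tail_support p, List.map_cons, List.foldr_cons, hu]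
  exact (min_eq_right (walkCap_le_one ρ p)).symm

theorem walkCap_reverse {u v : V} (hu : ρ u = 1) (hv : ρ v = 1) (p : G.Walk u v) :
    walkCap ρ p.reverse = walkCap ρ p := by
  rw [walkCap_eq_foldr_support ρ hv, walkCap_eq_foldr_support ρ hu, Walk.support_reverse,
    List.map_reverse]
  exact (List.reverse_perm _).foldr_eq _

theorem walkCap_mem_insert_range {u v : V} (p : G.Walk u v) :
    walkCap ρ p ∈ insert 1 (Set.range ρ) := by
  refine (List.foldr_min_eq_or_mem _ _).imp id fun h => ?_
  obtain ⟨w, -, hw⟩ := List.mem_map.mp h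
  exact ⟨w, hw⟩

theorem finite_walkCap_set [Finite V] (u v : V) :
    {x : ℝ | ∃ p : G.Walk u v, walkCap ρ p = x}.Finite := by
  refine ((Set.finite_range ρ).insert 1).subset ?_
  rintro x ⟨p, rfl⟩
  exact walkCap_mem_insert_range ρ p

theorem walkCap_le_nodeCap [Finite V] {u v : V} (p : G.Walk u v) :
    walkCap ρ p ≤ nodeCap ρ G u v :=
  le_csSup (finite_walkCap_set ρ u v).bddAbove ⟨p, rfl⟩

theorem exists_walkCap_eq_nodeCap [Finite V] {u v : V} (h : G.Reachable u v) :
    ∃ p : G.Walk u v, walkCap ρ p = nodeCap ρ G u v :=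
  have hne : {x : ℝ | ∃ p : G.Walk u v, walkCap ρ p = x}.Nonempty := h.elim fun p => ⟨_, p, rfl⟩
  hne.csSup_mem (finite_walkCap_set ρ u v)

theorem nodeCap_comm {u v : V} (hu : ρ u = 1) (hv : ρ v = 1) :
    nodeCap ρ G u v = nodeCap ρ G v u := by
  have key : ∀ {a b : V}, ρ a = 1 → ρ b = 1 →
      {x : ℝ | ∃ p : G.Walk a b, walkCap ρ p = x} ⊆ {x | ∃ p : G.Walk b a, walkCap ρ p = x} := by
    rintro a b ha hb _ ⟨p, rfl⟩
    exact ⟨p.reverse, walkCap_reverse ρ ha hb p⟩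
  exact congrArg sSup ((key hu hv).antisymm (key hv hu))

theorem min_nodeCap_le_nodeCap [Finite V] {u v w : V} (huv : G.Reachable u v)
    (hvw : G.Reachable v w) : min (nodeCap ρ G u v) (nodeCap ρ G v w) ≤ nodeCap ρ G u w := by
  obtain ⟨p, hp⟩ := exists_walkCap_eq_nodeCap ρ huv
  obtain ⟨q, hq⟩ := exists_walkCap_eq_nodeCap ρ hvw
  rw [← hp, ← hq, ← walkCap_append]
  exact walkCap_le_nodeCap ρ _

end WalkCapacity

section Ultrametric

variable {α β : Type*} [LinearOrder β]

theorem eq_or_eq_of_min_le_of_min_le {x y z : β} (hx : min y z ≤ x) (hz : min y x ≤ z)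
    (hxy : x ≤ y) : x = y ∨ x = z := by
  rw [min_eq_right hxy] at hz
  rcases min_choice y z with h | h
  · exact .inl (hxy.antisymm (h ▸ hx))
  · exact .inr (le_antisymm hz (h ▸ hx))

variable [DecidableEq α] {c : α → α → β}

theorem image_offDiag_insert_subset {s : Finset α} {b v₀ : α} (hv₀ : v₀ ∈ s)
    (hmax : ∀ v ∈ s, c b v ≤ c b v₀)
    (hsymm : ∀ u ∈ insert b s, ∀ v ∈ insert b s, c u v = c v u)
    (hultra : ∀ u ∈ insert b s, ∀ v ∈ insert b s, ∀ w ∈ insert b s,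
      min (c u v) (c v w) ≤ c u w) :
    (insert b s).offDiag.image (fun p => c p.1 p.2) ⊆
      insert (c b v₀) (s.offDiag.image fun p => c p.1 p.2) := by
  have hb' : b ∈ insert b s := s.mem_insert_self b
  have hv₀' : v₀ ∈ insert b s := Finset.mem_insert_of_mem hv₀
  have new_value : ∀ v ∈ s, c b v ∈ insert (c b v₀) (s.offDiag.image fun p => c p.1 p.2) := by
    intro v hv
    have hv' : v ∈ insert b s := Finset.mem_insert_of_mem hv
    rcases eq_or_eq_of_min_le_of_min_le (hultra b hb' v₀ hv₀' v hv')
      (hsymm v₀ hv₀' b hb' ▸ hultra v₀ hv₀' b hb' v hv') (hmax v hv) with h | h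
    · exact Finset.mem_insert.mpr (.inl h)
    · by_cases hv₀v : v₀ = v
      · exact Finset.mem_insert.mpr (.inl (hv₀v ▸ rfl))
      · exact Finset.mem_insert_of_mem
          (Finset.mem_image.mpr ⟨(v₀, v), Finset.mem_offDiag.mpr ⟨hv₀, hv, hv₀v⟩, h.symm⟩)
  simp only [Finset.subset_iff, Finset.mem_image, Finset.mem_offDiag, Finset.mem_insert]
  rintro _ ⟨⟨u, v⟩, h, rfl⟩
  obtain ⟨hu, hv, huv⟩ : (u = b ∨ u ∈ s) ∧ (v = b ∨ v ∈ s) ∧ u ≠ v := h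
  rcases hu with rfl | hu <;> rcases hv with rfl | hv
  · exact absurd rfl huv
  · simpa using new_value v hv
  · simpa [hsymm u (s.mem_insert_of_mem hu) v hb'] using new_value u hu
  · exact .inr ⟨(u, v), ⟨hu, hv, huv⟩, rfl⟩

theorem card_image_offDiag_le_of_ultrametric (S : Finset α)
    (hsymm : ∀ u ∈ S, ∀ v ∈ S, c u v = c v u)
    (hultra : ∀ u ∈ S, ∀ v ∈ S, ∀ w ∈ S, min (c u v) (c v w) ≤ c u w) :
    (S.offDiag.image fun p => c p.1 p.2).card ≤ S.card - 1 := by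
  induction S using Finset.induction_on with
  | empty => simp
  | insert b s hb ih =>
    rcases s.eq_empty_or_nonempty with rfl | hs
    · simp
    obtain ⟨v₀, hv₀, hmax⟩ := s.exists_max_image (c b) hs
    have ih' := ih (fun u hu v hv => hsymm u (s.mem_insert_of_mem hu) v (s.mem_insert_of_mem hv))
      (fun u hu v hv w hw => hultra u (s.mem_insert_of_mem hu) v (s.mem_insert_of_mem hv) w
        (s.mem_insert_of_mem hw))
    calc _ ≤ (insert (c b v₀) (s.offDiag.image fun p => c p.1 p.2)).card :=
          Finset.card_le_card (image_offDiag_insert_subset hv₀ hmax hsymm hultra)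
      _ ≤ (s.offDiag.image fun p => c p.1 p.2).card + 1 := Finset.card_insert_le _ _
      _ ≤ (insert b s).card - 1 := by
          rw [Finset.card_insert_of_notMem hb]
          have := hs.card_pos
          omega

end Ultrametric

section Clusters

variable {V : Type*} [Finite V] (ρ : V → ℝ) (G : SimpleGraph V) {O : Set V} (α : ℝ)

theorem numClusters_pos (hO : O.Nonempty) : 0 < numClusters ρ G O α :=
  Nat.card_pos_iff.2 ⟨⟨Quot.mk _ ⟨_, hO.some_mem⟩⟩, inferInstance⟩

theorem numClusters_le_ncard : numClusters ρ G O α ≤ O.ncard :=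
  (Nat.card_le_card_of_surjective _ Quot.mk_surjective).trans_eq (Nat.card_coe_set_eq O)

end Clusters

theorem JD_card_le_general {V : Type*} [Fintype V] (G : SimpleGraph V) (ρ : V → ℝ)
    (hG : G.Connected)
    (O : Set V) (hOne : O.Nonempty) (hO : ∀ o ∈ O, ρ o = 1) :
    {x : ℝ | ∃ u ∈ O, ∃ v ∈ O, u ≠ v ∧ x = nodeCap ρ G u v ∧ x < 1}.ncard ≤ O.ncard ∧
    {n : ℕ | ∃ α : ℝ, 0 ≤ α ∧ α < 1 ∧ numClusters ρ G O α = n}.ncard ≤ O.ncard := by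
  classical
  constructor
  · have hL : {x : ℝ | ∃ u ∈ O, ∃ v ∈ O, u ≠ v ∧ x = nodeCap ρ G u v ∧ x < 1} ⊆
        ↑(O.toFinset.offDiag.image fun p => nodeCap ρ G p.1 p.2) := by
      rintro x ⟨u, hu, v, hv, huv, rfl, -⟩
      simpa using ⟨u, v, ⟨hu, hv, huv⟩, rfl⟩
    calc _ ≤ (O.toFinset.offDiag.image fun p => nodeCap ρ G p.1 p.2).card :=
          (Set.ncard_le_ncard hL (Finset.finite_toSet _)).trans_eq (Set.ncard_coe_finset _)
      _ ≤ O.toFinset.card - 1 := card_image_offDiag_le_of_ultrametric _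
          (fun u hu v hv => nodeCap_comm ρ (hO u (by simpa using hu)) (hO v (by simpa using hv)))
          (fun u _ v _ w _ => min_nodeCap_le_nodeCap ρ (hG.preconnected u v) (hG.preconnected v w))
      _ ≤ O.ncard := (Set.ncard_eq_toFinset_card' O).symm ▸ Nat.sub_le _ _
  · calc _ ≤ (Set.Icc 1 O.ncard).ncard := by
          refine Set.ncard_le_ncard ?_ (Set.finite_Icc _ _)
          rintro _ ⟨α, -, -, rfl⟩
          exact ⟨numClusters_pos ρ G α hOne, numClusters_le_ncard ρ G α⟩
      _ = O.ncard := by simp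

/-- bound on the number of jump discontinuities: with
`L = {c(u,v) : u, v ∈ O, u ≠ v, c(u,v) < 1}` we have `|L| ≤ |O|`; equivalently, the
cluster-count function `α ↦ N(α)` takes at most `|O|` distinct values on `[0,1)`. -/
theorem JD_card_le {V : Type*} [Fintype V] (G : SimpleGraph V) (ρ : V → ℝ)
    (hρ : ∀ v : V, 0 ≤ ρ v ∧ ρ v ≤ 1) (hG : G.Connected)
    (O : Set V) (hOne : O.Nonempty) (hO : ∀ o ∈ O, ρ o = 1) :
    {x : ℝ | ∃ u ∈ O, ∃ v ∈ O, u ≠ v ∧ x = nodeCap ρ G u v ∧ x < 1}.ncard ≤ O.ncard ∧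
    {n : ℕ | ∃ α : ℝ, 0 ≤ α ∧ α < 1 ∧ numClusters ρ G O α = n}.ncard ≤ O.ncard :=
  JD_card_le_general G ρ hG O hOne hO
end
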